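/- Optimal solution of the Tool Loading Problem (Theorem 2, statement 2): the sequence ToFullMag(GPCA(T_1,…,T_n;C)) is a feasible full-magazine sequence attaining the minimum number of tool switches: ToFullMag(GPCA(T_1,…,T_n;C)) ∈ argmin{switches(M) : M ∈ M}. -/

import Mathlib

def fillFrom (C : ℕ) (src dst : Finset ℕ) : Finset ℕ :=
  dst ∪ (((src \ dst).sort (· ≤ ·)).take (C - dst.card)).toFinset

def passPairs (C : ℕ) (pairs : List (ℕ × ℕ)) (L : ℕ → Finset ℕ) : ℕ → Finset ℕ :=
  pairs.foldl (fun M p => Function.update M p.2 (fillFrom C (M p.1) (M p.2))) L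

def fwdPairs (n : ℕ) : List (ℕ × ℕ) := (List.range (n - 1)).map (fun i => (i + 1, i + 2))

def bwdPairs (n : ℕ) : List (ℕ × ℕ) := (List.range (n - 1)).map (fun i => (n - i, n - i - 1))

def toFullMag (C n : ℕ) (L : ℕ → Finset ℕ) : ℕ → Finset ℕ :=
  passPairs C (bwdPairs n) (passPairs C (fwdPairs n) L)

def addRange (t s e : ℕ) (M : ℕ → Finset ℕ) : ℕ → Finset ℕ :=
  fun i => if s < i ∧ i < e then insert t (M i) else M i

def gpcaStep (C : ℕ) (T : ℕ → Finset ℕ) (e : ℕ) (M : ℕ → Finset ℕ) (t : ℕ) : ℕ → Finset ℕ :=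
  match ((List.range e).filter (fun s => decide (t ∈ T s))).max? with
  | none => M
  | some s => if ∀ i ∈ Finset.Ioo s e, (M i).card < C then addRange t s e M else M

def GPCA (C n : ℕ) (T : ℕ → Finset ℕ) : ℕ → Finset ℕ :=
  (List.range n).foldl
    (fun M e => ((T (e + 1)).sort (· ≤ ·)).foldl (gpcaStep C T (e + 1)) M) T

def switches (n : ℕ) (L : ℕ → Finset ℕ) : ℕ :=
  ∑ i ∈ Finset.Icc 1 (n - 1), ((L (i + 1)) \ (L i)).card

def Feasible (C n : ℕ) (T M : ℕ → Finset ℕ) : Prop :=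
  ∀ i ∈ Finset.Icc 1 n, T i ⊆ M i ∧ (M i).card = C ∧ M i ⊆ (Finset.Icc 1 n).biUnion T

/-!
A gap of a tool is a pair of consecutive requests for it; a magazine sequence lays a pipe over
the gap if it keeps the tool loaded in between. Count, tool by tool, the positions where the
tool is put into the magazine. For a feasible `M`, every gap that `M` does not bridge ends a
fresh run of its tool, and each tool has one more run than that, so
`switches M + C ≥ #gaps - #pipes M + #tools`.

Pipes through position `i` use the `C - |Tᵢ|` free slots there, so the pipes of `M` pack open
intervals under these capacities. GPCA is the greedy algorithm that takes such intervals in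
order of right endpoint, and an exchange argument shows that it builds a largest packing. For
the GPCA output, runs start only at the first request or at the end of an unbridged gap.
ToFullMag only extends runs, so it never adds one, and the bound is attained.
-/

open Finset

namespace ToolLoading

section Greedy

variable {α : Type*} (lo hi : α → ℕ) (cap : ℕ → ℕ)

def load (S : Finset α) (j : ℕ) : ℕ := #{a ∈ S | j ∈ Ioo (lo a) (hi a)}

def IsPacking (S : Finset α) : Prop := ∀ j, load lo hi S j ≤ cap j

def Fits (S : Finset α) (a : α) : Prop := ∀ j ∈ Ioo (lo a) (hi a), load lo hi S j < cap j

instance (S : Finset α) (a : α) : Decidable (Fits lo hi cap S a) := by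
  unfold Fits; infer_instance

def greedy [DecidableEq α] (S : Finset α) (l : List α) : Finset α :=
  l.foldl (fun S a => if Fits lo hi cap S a then insert a S else S) S

variable {lo hi cap}

lemma load_mono {S S' : Finset α} (h : S ⊆ S') (j : ℕ) :
    load lo hi S j ≤ load lo hi S' j :=
  card_le_card (filter_subset_filter _ h)

lemma notMem_of_not_fits {S Q : Finset α} {a : α} (hQ : IsPacking lo hi cap Q) (hSQ : S ⊆ Q)
    (ha : ¬ Fits lo hi cap S a) (haS : a ∉ S) : a ∉ Q := by
  intro haQ
  obtain ⟨j, hj, hfull⟩ : ∃ j ∈ Ioo (lo a) (hi a), cap j ≤ load lo hi S j := by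
    simpa [Fits, and_assoc] using ha
  have : load lo hi S j < load lo hi Q j :=
    card_lt_card <| (ssubset_iff_of_subset (filter_subset_filter _ hSQ)).2
      ⟨a, mem_filter.2 ⟨haQ, hj⟩, fun h => haS (mem_filter.1 h).1⟩
  have := hQ j
  omega

variable [DecidableEq α]

lemma load_insert_le (S : Finset α) (a : α) (j : ℕ) :
    load lo hi (insert a S) j ≤ load lo hi S j + 1 := by
  unfold load
  rw [filter_insert]
  split_ifs
  · exact card_insert_le _ _
  · omega

lemma load_insert_of_notMem {S : Finset α} {a : α} {j : ℕ} (hj : j ∉ Ioo (lo a) (hi a)) :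
    load lo hi (insert a S) j = load lo hi S j := by
  unfold load
  rw [filter_insert, if_neg hj]

lemma load_erase_add_one {S : Finset α} {a : α} (ha : a ∈ S) {j : ℕ}
    (hj : j ∈ Ioo (lo a) (hi a)) : load lo hi (S.erase a) j + 1 = load lo hi S j := by
  unfold load
  rw [filter_erase, card_erase_add_one (mem_filter.2 ⟨ha, hj⟩)]

lemma IsPacking.insert_of_fits {S : Finset α} {a : α} (hS : IsPacking lo hi cap S)
    (ha : Fits lo hi cap S a) : IsPacking lo hi cap (insert a S) := by
  intro j
  by_cases hj : j ∈ Ioo (lo a) (hi a)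
  · exact (load_insert_le S a j).trans (ha j hj)
  · rw [load_insert_of_notMem hj]
    exact hS j

lemma IsPacking.exchange {S : Finset α} {a b : α} (hS : IsPacking lo hi cap S) (hb : b ∈ S)
    (hfree : ∀ j ∈ Ioo (lo a) (hi a), j ∉ Ioo (lo b) (hi b) → load lo hi S j < cap j) :
    IsPacking lo hi cap (insert a (S.erase b)) := by
  intro j
  have hins : load lo hi (insert a (S.erase b)) j ≤ _ := load_insert_le (S.erase b) a j
  by_cases hjb : j ∈ Ioo (lo b) (hi b)
  · have := load_erase_add_one hb hjb
    have := hS j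
    omega
  have herase : load lo hi (S.erase b) j ≤ _ := load_mono (S.erase_subset b) j
  by_cases hja : j ∈ Ioo (lo a) (hi a)
  · have := hfree j hja hjb
    omega
  · rw [load_insert_of_notMem hja]
    exact herase.trans (hS j)

lemma greedy_cons (S : Finset α) (a : α) (l : List α) :
    greedy lo hi cap S (a :: l) =
      greedy lo hi cap (if Fits lo hi cap S a then insert a S else S) l := rfl

lemma subset_greedy (S : Finset α) (l : List α) : S ⊆ greedy lo hi cap S l := by
  induction l generalizing S with
  | nil => exact Subset.rfl
  | cons a l ih =>
    rw [greedy_cons]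
    refine Subset.trans ?_ (ih _)
    split_ifs
    · exact subset_insert _ _
    · exact Subset.rfl

lemma greedy_subset (S : Finset α) (l : List α) : greedy lo hi cap S l ⊆ S ∪ l.toFinset := by
  induction l generalizing S with
  | nil => simp [greedy]
  | cons a l ih =>
    rw [greedy_cons]
    refine (ih _).trans ?_
    split_ifs <;> intro x <;> simp +contextual

lemma IsPacking.greedy {S : Finset α} (hS : IsPacking lo hi cap S) (l : List α) :
    IsPacking lo hi cap (greedy lo hi cap S l) := by
  induction l generalizing S with
  | nil => exact hS
  | cons a l ih =>
    rw [greedy_cons]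
    split_ifs with ha
    · exact ih (hS.insert_of_fits ha)
    · exact ih hS

lemma mem_greedy_of_Ioo_eq_empty {a : α} (ha : Ioo (lo a) (hi a) = ∅) (S : Finset α)
    {l : List α} (hal : a ∈ l) : a ∈ greedy lo hi cap S l := by
  induction l generalizing S with
  | nil => simp at hal
  | cons b l ih =>
    rw [greedy_cons]
    rcases List.mem_cons.1 hal with rfl | hal
    · have hfit : Fits lo hi cap S a := fun j hj => by simp [ha] at hj
      rw [if_pos hfit]
      exact subset_greedy _ _ (mem_insert_self _ _)
    · exact ih _ hal

lemma IsPacking.exists_of_fits {S Q : Finset α} {a : α} (hQ : IsPacking lo hi cap Q)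
    (hSQ : S ⊆ Q) (ha : Fits lo hi cap S a) (hlast : ∀ b ∈ Q \ S, hi a ≤ hi b) :
    ∃ Q', IsPacking lo hi cap Q' ∧ insert a S ⊆ Q' ∧ #Q ≤ #Q' ∧ Q' ⊆ insert a Q := by
  by_cases haQ : a ∈ Q
  · exact ⟨Q, hQ, insert_subset haQ hSQ, le_rfl, subset_insert _ _⟩
  set full := {j ∈ Ioo (lo a) (hi a) | cap j ≤ load lo hi Q j}
  rcases full.eq_empty_or_nonempty with hfull | hfull
  · have hfit : Fits lo hi cap Q a := fun j hj => by
      by_contra h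
      exact notMem_empty j (hfull ▸ mem_filter.2 ⟨hj, not_lt.1 h⟩)
    exact ⟨insert a Q, hQ.insert_of_fits hfit, insert_subset_insert a hSQ,
      card_le_card (subset_insert a Q), Subset.rfl⟩
  -- `b` is an element of `Q \ S` over the first point where `Q` is full along `a`.
  set j := full.min' hfull
  have hj : j ∈ full := full.min'_mem hfull
  obtain ⟨hja, hjfull⟩ := mem_filter.1 hj
  obtain ⟨b, hbQ, hbS, hjb⟩ : ∃ b ∈ Q, b ∉ S ∧ j ∈ Ioo (lo b) (hi b) := by
    by_contra! h
    have : load lo hi Q j ≤ load lo hi S j :=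
      card_le_card fun x hx => mem_filter.2
        ⟨by_contra fun hxS => h x (mem_filter.1 hx).1 hxS (mem_filter.1 hx).2,
          (mem_filter.1 hx).2⟩
    have := ha j hja
    omega
  have hab : hi a ≤ hi b := hlast b (mem_sdiff.2 ⟨hbQ, hbS⟩)
  have hpack : IsPacking lo hi cap (insert a (Q.erase b)) := by
    refine hQ.exchange hbQ fun j' hj'a hj'b => ?_
    have hj' : j' < j := by simp only [mem_Ioo] at hj'a hj'b hjb; omega
    by_contra h
    exact absurd (full.min'_le j' (mem_filter.2 ⟨hj'a, not_lt.1 h⟩)) (not_le.2 hj')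
  refine ⟨insert a (Q.erase b), hpack, insert_subset_insert a fun x hx => ?_, ?_,
    insert_subset_insert a (erase_subset b Q)⟩
  · exact mem_erase.2 ⟨fun h => hbS (h ▸ hx), hSQ hx⟩
  · rw [card_insert_of_notMem fun h => haQ (mem_of_mem_erase h), card_erase_add_one hbQ]

theorem card_le_card_greedy {l : List α} (hl : l.Pairwise fun a b => hi a ≤ hi b)
    {S Q : Finset α} (hQ : IsPacking lo hi cap Q) (hSQ : S ⊆ Q) (hQl : Q \ S ⊆ l.toFinset) :
    #Q ≤ #(greedy lo hi cap S l) := by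
  induction l generalizing S Q with
  | nil =>
    rw [List.toFinset_nil, subset_empty, sdiff_eq_empty_iff_subset] at hQl
    exact card_le_card hQl
  | cons a l ih =>
    have hmem : ∀ x ∈ Q \ S, x = a ∨ x ∈ l := fun x hx => by simpa using hQl hx
    rw [greedy_cons]
    split_ifs with ha
    · obtain ⟨Q', hQ', hSQ', hcard, hQ'Q⟩ := hQ.exists_of_fits hSQ ha fun b hb =>
        (hmem b hb).elim (fun h => h ▸ le_rfl) (List.rel_of_pairwise_cons hl)
      refine hcard.trans (ih hl.of_cons hQ' hSQ' fun x hx => ?_)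
      obtain ⟨hxQ', hxS⟩ := mem_sdiff.1 hx
      have hxa : x ≠ a := fun h => hxS (h ▸ mem_insert_self a S)
      have hxQ : x ∈ Q := (mem_insert.1 (hQ'Q hxQ')).resolve_left hxa
      exact List.mem_toFinset.2 <| (hmem x (mem_sdiff.2 ⟨hxQ, fun h => hxS
        (mem_insert_of_mem h)⟩)).resolve_left hxa
    · refine ih hl.of_cons hQ hSQ fun x hx => List.mem_toFinset.2 ?_
      refine (hmem x hx).resolve_left ?_
      rintro rfl
      exact notMem_of_not_fits hQ hSQ ha (mem_sdiff.1 hx).2 (mem_sdiff.1 hx).1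

end Greedy

@[ext]
structure Gap where
  tool : ℕ
  lo : ℕ
  hi : ℕ
  deriving DecidableEq

structure IsGap (n : ℕ) (T : ℕ → Finset ℕ) (g : Gap) : Prop where
  mem_lo : g.tool ∈ T g.lo
  mem_hi : g.tool ∈ T g.hi
  lo_lt_hi : g.lo < g.hi
  one_le_lo : 1 ≤ g.lo
  hi_le : g.hi ≤ n
  notMem : ∀ i ∈ Ioo g.lo g.hi, g.tool ∉ T i

section Gaps

variable {n C : ℕ} {T : ℕ → Finset ℕ}

lemma IsGap.eq_of_mem_Ioc {g h : Gap} (hg : IsGap n T g) (hh : IsGap n T h)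
    (htool : g.tool = h.tool) {j : ℕ} (hjg : j ∈ Ioc g.lo g.hi) (hjh : j ∈ Ioc h.lo h.hi) :
    g = h := by
  rw [mem_Ioc] at hjg hjh
  have hhi : g.hi = h.hi := by
    by_contra hne
    rcases Nat.lt_or_gt_of_ne hne with hlt | hlt
    · exact hh.notMem g.hi (mem_Ioo.2 ⟨by omega, hlt⟩) (htool ▸ hg.mem_hi)
    · exact hg.notMem h.hi (mem_Ioo.2 ⟨by omega, hlt⟩) (htool ▸ hh.mem_hi)
  have hlo : g.lo = h.lo := by
    by_contra hne
    rcases Nat.lt_or_gt_of_ne hne with hlt | hlt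
    · exact hg.notMem h.lo (mem_Ioo.2 ⟨hlt, by omega⟩) (htool ▸ hh.mem_lo)
    · exact hh.notMem g.lo (mem_Ioo.2 ⟨hlt, by omega⟩) (htool ▸ hg.mem_lo)
  exact Gap.ext htool hlo hhi

lemma IsGap.eq_of_mem_Ioo {g h : Gap} (hg : IsGap n T g) (hh : IsGap n T h)
    (htool : g.tool = h.tool) {j : ℕ} (hjg : j ∈ Ioo g.lo g.hi) (hjh : j ∈ Ioo h.lo h.hi) :
    g = h :=
  hg.eq_of_mem_Ioc hh htool (Ioo_subset_Ioc_self hjg) (Ioo_subset_Ioc_self hjh)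

lemma IsGap.mem_Icc_of_mem_Ioo {g : Gap} (hg : IsGap n T g) {i : ℕ} (hi : i ∈ Ioo g.lo g.hi) :
    i ∈ Icc 1 n := by
  have := hg.one_le_lo
  have := hg.hi_le
  simp only [mem_Ioo, mem_Icc] at hi ⊢
  omega

lemma IsGap.tool_mem_biUnion {g : Gap} (hg : IsGap n T g) :
    g.tool ∈ (Icc 1 n).biUnion T := by
  have := hg.one_le_lo
  have := hg.lo_lt_hi
  exact mem_biUnion.2 ⟨g.hi, mem_Icc.2 ⟨by omega, hg.hi_le⟩, hg.mem_hi⟩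

variable (T) in
/-- The lookup made in `gpcaStep`. -/
def lastBefore (t e : ℕ) : Option ℕ :=
  ((List.range e).filter fun s => decide (t ∈ T s)).max?

lemma lastBefore_eq_some {t e s : ℕ} (h : lastBefore T t e = some s) :
    s < e ∧ t ∈ T s ∧ ∀ i, s < i → i < e → t ∉ T i := by
  obtain ⟨hmem, hmax⟩ := List.max?_eq_some_iff.1 h
  simp only [List.mem_filter, List.mem_range, decide_eq_true_eq] at hmem hmax
  exact ⟨hmem.1, hmem.2, fun i hsi hie hti => absurd (hmax i ⟨hie, hti⟩) (not_le.2 hsi)⟩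

lemma exists_lastBefore_eq_some {t e s : ℕ} (hse : s < e) (hts : t ∈ T s) :
    ∃ s', lastBefore T t e = some s' := by
  have hmem : s ∈ (List.range e).filter fun s => decide (t ∈ T s) := by simp [hse, hts]
  exact Option.ne_none_iff_exists'.1 (mt List.max?_eq_none_iff.1 (List.ne_nil_of_mem hmem))

lemma isGap_of_lastBefore_eq_some (hout : ∀ i, i ∉ Icc 1 n → T i = ∅) {t s e : ℕ}
    (hs : lastBefore T t e = some s) (he : e ≤ n) (hte : t ∈ T e) : IsGap n T ⟨t, s, e⟩ := by
  obtain ⟨hse, hts, hfree⟩ := lastBefore_eq_some hs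
  refine ⟨hts, hte, hse, ?_, he, fun i hi => hfree i (mem_Ioo.1 hi).1 (mem_Ioo.1 hi).2⟩
  show 1 ≤ s
  by_contra h0
  have hs0 : s ∉ Icc 1 n := by simp only [mem_Icc]; omega
  simp [hout s hs0] at hts

variable (n T) in
/-- The requests `(e, t)` in the order in which `GPCA` visits them. -/
def demands : List (ℕ × ℕ) :=
  (List.range n).flatMap fun e => ((T (e + 1)).sort (· ≤ ·)).map fun t => (e + 1, t)

lemma mem_demands {p : ℕ × ℕ} : p ∈ demands n T ↔ p.1 ∈ Icc 1 n ∧ p.2 ∈ T p.1 := by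
  obtain ⟨e, t⟩ := p
  simp only [demands, List.mem_flatMap, List.mem_range, List.mem_map, mem_sort, Prod.mk.injEq,
    mem_Icc]
  constructor
  · rintro ⟨e, he, t, ht, rfl, rfl⟩
    exact ⟨⟨by omega, by omega⟩, ht⟩
  · rintro ⟨⟨h1, h2⟩, ht⟩
    exact ⟨e - 1, by omega, t, by rwa [Nat.sub_add_cancel h1], by omega, rfl⟩

lemma GPCA_eq_foldl_demands :
    GPCA C n T = (demands n T).foldl (fun M p => gpcaStep C T p.1 M p.2) T := by
  rw [demands, List.foldl_flatMap, GPCA]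
  simp only [List.foldl_map]

variable (T) in
def gapAt (p : ℕ × ℕ) : Option Gap :=
  (lastBefore T p.2 p.1).map fun s => ⟨p.2, s, p.1⟩

variable (n T) in
def gaps : List Gap := (demands n T).filterMap (gapAt T)

lemma mem_gaps {g : Gap} :
    g ∈ gaps n T ↔ g.hi ∈ Icc 1 n ∧ g.tool ∈ T g.hi ∧ lastBefore T g.tool g.hi = some g.lo := by
  simp only [gaps, List.mem_filterMap, gapAt, Option.map_eq_some_iff, mem_demands]
  constructor
  · rintro ⟨p, ⟨hp1, hp2⟩, s, hs, rfl⟩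
    exact ⟨hp1, hp2, hs⟩
  · rintro ⟨h1, h2, h3⟩
    exact ⟨(g.hi, g.tool), ⟨h1, h2⟩, g.lo, h3, rfl⟩

lemma IsGap.of_mem_gaps (hout : ∀ i, i ∉ Icc 1 n → T i = ∅) {g : Gap} (hg : g ∈ gaps n T) :
    IsGap n T g := by
  obtain ⟨hhi, hmem, hlast⟩ := mem_gaps.1 hg
  exact isGap_of_lastBefore_eq_some hout hlast (mem_Icc.1 hhi).2 hmem

lemma gaps_sorted : (gaps n T).Pairwise fun a b => a.hi ≤ b.hi := by
  have hdem : (demands n T).Pairwise fun p q => p.1 ≤ q.1 := by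
    refine List.pairwise_flatMap.2 ⟨fun e _ => ?_, ?_⟩
    · exact List.pairwise_map.2 (List.Pairwise.imp (fun _ => le_rfl) (sort_nodup _ _))
    · refine (List.pairwise_lt_range).imp fun hlt p hp q hq => ?_
      obtain ⟨_, _, rfl⟩ := List.mem_map.1 hp
      obtain ⟨_, _, rfl⟩ := List.mem_map.1 hq
      simp only
      omega
  refine List.pairwise_filterMap.2 (hdem.imp fun hpq g hg g' hg' => ?_)
  simp only [gapAt, Option.map_eq_some_iff] at hg hg'
  obtain ⟨_, _, rfl⟩ := hg
  obtain ⟨_, _, rfl⟩ := hg'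
  exact hpq

end Gaps

section GPCA

variable {n C : ℕ} {T : ℕ → Finset ℕ}

variable (C T) in
def slack (i : ℕ) : ℕ := C - #(T i)

def toolsOver (S : Finset Gap) (i : ℕ) : Finset ℕ :=
  {g ∈ S | i ∈ Ioo g.lo g.hi}.image Gap.tool

lemma mem_toolsOver {S : Finset Gap} {i t : ℕ} :
    t ∈ toolsOver S i ↔ ∃ g ∈ S, g.tool = t ∧ i ∈ Ioo g.lo g.hi := by
  simp only [toolsOver, mem_image, mem_filter, and_assoc]
  exact ⟨fun ⟨g, hg, hi, ht⟩ => ⟨g, hg, ht, hi⟩, fun ⟨g, hg, ht, hi⟩ => ⟨g, hg, hi, ht⟩⟩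

lemma toolsOver_insert (S : Finset Gap) (g : Gap) (i : ℕ) :
    toolsOver (insert g S) i =
      if i ∈ Ioo g.lo g.hi then insert g.tool (toolsOver S i) else toolsOver S i := by
  unfold toolsOver
  rw [filter_insert]
  split_ifs <;> simp

variable (n T) in
/-- `M` is `T` with the pipes `S` laid. -/
structure Realizes (S : Finset Gap) (M : ℕ → Finset ℕ) : Prop where
  isGap : ∀ g ∈ S, IsGap n T g
  apply_eq : ∀ i, M i = T i ∪ toolsOver S i

lemma Realizes.card_apply {S : Finset Gap} {M : ℕ → Finset ℕ} (h : Realizes n T S M) (i : ℕ) :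
    #(M i) = #(T i) + load Gap.lo Gap.hi S i := by
  have hdisj : Disjoint (T i) (toolsOver S i) := disjoint_right.2 fun t ht hti => by
    obtain ⟨g, hg, rfl, hgi⟩ := mem_toolsOver.1 ht
    exact (h.isGap g hg).notMem i hgi hti
  rw [h.apply_eq i, card_union_of_disjoint hdisj, toolsOver,
    card_image_of_injOn fun g hg g' hg' htool => (h.isGap g (mem_filter.1 hg).1).eq_of_mem_Ioo
      (h.isGap g' (mem_filter.1 hg').1) htool (mem_filter.1 hg).2 (mem_filter.1 hg').2]
  rfl

lemma Realizes.fits_iff (hTc : ∀ i ∈ Icc 1 n, #(T i) ≤ C) {S : Finset Gap}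
    {M : ℕ → Finset ℕ} (h : Realizes n T S M) {g : Gap} (hg : IsGap n T g) :
    Fits Gap.lo Gap.hi (slack C T) S g ↔ ∀ i ∈ Ioo g.lo g.hi, #(M i) < C := by
  refine forall₂_congr fun i hi => ?_
  have := hTc i (hg.mem_Icc_of_mem_Ioo hi)
  rw [h.card_apply, slack]
  omega

lemma Realizes.addRange_insert {S : Finset Gap} {M : ℕ → Finset ℕ} (h : Realizes n T S M)
    {t s e : ℕ} (hg : IsGap n T ⟨t, s, e⟩) :
    Realizes n T (insert ⟨t, s, e⟩ S) (addRange t s e M) := by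
  refine ⟨fun g hg' => (mem_insert.1 hg').elim (· ▸ hg) (h.isGap g), fun i => ?_⟩
  rw [addRange, toolsOver_insert, h.apply_eq i]
  simp only [mem_Ioo]
  split_ifs <;> simp

lemma gpcaStep_of_lastBefore_eq_none {e t : ℕ} (M : ℕ → Finset ℕ)
    (h : lastBefore T t e = none) : gpcaStep C T e M t = M := by
  rw [gpcaStep, show ((List.range e).filter fun s => decide (t ∈ T s)).max? = none from h]

lemma gpcaStep_of_lastBefore_eq_some {e t s : ℕ} (M : ℕ → Finset ℕ)
    (h : lastBefore T t e = some s) :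
    gpcaStep C T e M t =
      if ∀ i ∈ Ioo s e, #(M i) < C then addRange t s e M else M := by
  rw [gpcaStep, show ((List.range e).filter fun s => decide (t ∈ T s)).max? = some s from h]

lemma Realizes.foldl_gpcaStep (hout : ∀ i, i ∉ Icc 1 n → T i = ∅)
    (hTc : ∀ i ∈ Icc 1 n, #(T i) ≤ C) {l : List (ℕ × ℕ)}
    (hl : ∀ p ∈ l, p.1 ∈ Icc 1 n ∧ p.2 ∈ T p.1) {S : Finset Gap} {M : ℕ → Finset ℕ}
    (h : Realizes n T S M) :
    Realizes n T (greedy Gap.lo Gap.hi (slack C T) S (l.filterMap (gapAt T)))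
      (l.foldl (fun M p => gpcaStep C T p.1 M p.2) M) := by
  induction l generalizing S M with
  | nil => exact h
  | cons p l ih =>
    obtain ⟨e, t⟩ := p
    obtain ⟨he, ht⟩ := hl (e, t) List.mem_cons_self
    have hl' := fun q hq => hl q (List.mem_cons_of_mem _ hq)
    rw [List.foldl_cons]
    cases hs : lastBefore T t e with
    | none =>
      rw [List.filterMap_cons_none (by simp [gapAt, hs]), gpcaStep_of_lastBefore_eq_none M hs]
      exact ih hl' h
    | some s =>
      have hg := isGap_of_lastBefore_eq_some hout hs (mem_Icc.1 he).2 ht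
      rw [List.filterMap_cons_some (by simp [gapAt, hs] : gapAt T (e, t) = some ⟨t, s, e⟩),
        greedy_cons, gpcaStep_of_lastBefore_eq_some M hs]
      by_cases hfit : ∀ i ∈ Ioo s e, #(M i) < C
      · rw [if_pos hfit, if_pos ((h.fits_iff hTc hg).2 hfit)]
        exact ih hl' (h.addRange_insert hg)
      · rw [if_neg hfit, if_neg fun h' => hfit ((h.fits_iff hTc hg).1 h')]
        exact ih hl' h

lemma realizes_GPCA (hout : ∀ i, i ∉ Icc 1 n → T i = ∅) (hTc : ∀ i ∈ Icc 1 n, #(T i) ≤ C) :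
    Realizes n T (greedy Gap.lo Gap.hi (slack C T) ∅ (gaps n T)) (GPCA C n T) := by
  rw [GPCA_eq_foldl_demands]
  exact Realizes.foldl_gpcaStep hout hTc (fun p hp => mem_demands.1 hp)
    ⟨by simp, fun i => by simp [toolsOver]⟩

end GPCA

section Pipes

variable {n C : ℕ} {T : ℕ → Finset ℕ}

lemma subset_GPCA (hout : ∀ i, i ∉ Icc 1 n → T i = ∅) (hTc : ∀ i ∈ Icc 1 n, #(T i) ≤ C)
    (i : ℕ) : T i ⊆ GPCA C n T i := by
  rw [(realizes_GPCA hout hTc).apply_eq i]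
  exact subset_union_left

lemma card_GPCA_le (hout : ∀ i, i ∉ Icc 1 n → T i = ∅) (hTc : ∀ i ∈ Icc 1 n, #(T i) ≤ C)
    (i : ℕ) : #(GPCA C n T i) ≤ C := by
  have hT : #(T i) ≤ C := by
    by_cases hi : i ∈ Icc 1 n
    · exact hTc i hi
    · simp [hout i hi]
  have hpack := IsPacking.greedy (lo := Gap.lo) (hi := Gap.hi) (cap := slack C T) (S := ∅)
    (fun j => by simp [load]) (gaps n T) i
  rw [slack] at hpack
  rw [(realizes_GPCA hout hTc).card_apply]
  omega

lemma GPCA_subset_biUnion (hout : ∀ i, i ∉ Icc 1 n → T i = ∅)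
    (hTc : ∀ i ∈ Icc 1 n, #(T i) ≤ C) (i : ℕ) : GPCA C n T i ⊆ (Icc 1 n).biUnion T := by
  have h := realizes_GPCA hout hTc
  rw [h.apply_eq i]
  refine union_subset ?_ fun t ht => ?_
  · by_cases hi : i ∈ Icc 1 n
    · exact subset_biUnion_of_mem T hi
    · simp [hout i hi]
  · obtain ⟨g, hg, rfl, _⟩ := mem_toolsOver.1 ht
    exact (h.isGap g hg).tool_mem_biUnion

variable (n T) in
/-- The pipes `P(M)` of the paper. -/
def pipes (M : ℕ → Finset ℕ) : Finset Gap :=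
  {g ∈ (gaps n T).toFinset | ∀ i ∈ Ioo g.lo g.hi, g.tool ∈ M i}

lemma greedy_eq_pipes_GPCA (hout : ∀ i, i ∉ Icc 1 n → T i = ∅)
    (hTc : ∀ i ∈ Icc 1 n, #(T i) ≤ C) :
    greedy Gap.lo Gap.hi (slack C T) ∅ (gaps n T) = pipes n T (GPCA C n T) := by
  have h := realizes_GPCA hout hTc
  have hsub : greedy Gap.lo Gap.hi (slack C T) ∅ (gaps n T) ⊆ (gaps n T).toFinset := by
    simpa using greedy_subset (lo := Gap.lo) (hi := Gap.hi) (cap := slack C T) ∅ (gaps n T)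
  ext g
  simp only [pipes, mem_filter]
  constructor
  · intro hg
    refine ⟨hsub hg, fun i hi => ?_⟩
    rw [h.apply_eq i]
    exact mem_union_right _ (mem_toolsOver.2 ⟨g, hg, rfl, hi⟩)
  · rintro ⟨hgaps, hpipe⟩
    have hg := IsGap.of_mem_gaps hout (List.mem_toFinset.1 hgaps)
    rcases (Ioo g.lo g.hi).eq_empty_or_nonempty with hempty | ⟨i, hi⟩
    · exact mem_greedy_of_Ioo_eq_empty hempty _ (List.mem_toFinset.1 hgaps)
    have hgi := hpipe i hi
    rw [h.apply_eq i] at hgi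
    obtain ⟨g', hg', htool, hg'i⟩ :=
      mem_toolsOver.1 ((mem_union.1 hgi).resolve_left (hg.notMem i hi))
    rwa [hg.eq_of_mem_Ioo (h.isGap g' hg') htool.symm hi hg'i]

lemma isPacking_pipes (hout : ∀ i, i ∉ Icc 1 n → T i = ∅) {M : ℕ → Finset ℕ}
    (hM : Feasible C n T M) : IsPacking Gap.lo Gap.hi (slack C T) (pipes n T M) := by
  intro j
  have hgap : ∀ g ∈ pipes n T M, IsGap n T g :=
    fun g hg => IsGap.of_mem_gaps hout (List.mem_toFinset.1 (mem_filter.1 hg).1)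
  by_cases hj : j ∈ Icc 1 n
  · obtain ⟨hTM, hcard, -⟩ := hM j hj
    rw [slack, ← hcard, ← card_sdiff_of_subset hTM]
    refine card_le_card_of_injOn Gap.tool (fun g hg => ?_) fun g hg g' hg' htool => ?_
    · obtain ⟨hg, hjg⟩ := mem_filter.1 hg
      exact mem_sdiff.2 ⟨(mem_filter.1 hg).2 j hjg, (hgap g hg).notMem j hjg⟩
    · obtain ⟨hg, hjg⟩ := mem_filter.1 hg
      obtain ⟨hg', hjg'⟩ := mem_filter.1 hg'
      exact (hgap g hg).eq_of_mem_Ioo (hgap g' hg') htool hjg hjg'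
  · rw [load, filter_eq_empty_iff.2 fun g hg hjg => hj ((hgap g hg).mem_Icc_of_mem_Ioo hjg)]
    exact Nat.zero_le _

lemma card_pipes_le_card_pipes_GPCA (hout : ∀ i, i ∉ Icc 1 n → T i = ∅)
    (hTc : ∀ i ∈ Icc 1 n, #(T i) ≤ C) {M : ℕ → Finset ℕ} (hM : Feasible C n T M) :
    #(pipes n T M) ≤ #(pipes n T (GPCA C n T)) := by
  rw [← greedy_eq_pipes_GPCA hout hTc]
  exact card_le_card_greedy gaps_sorted (isPacking_pipes hout hM) (empty_subset _)
    (by rw [sdiff_empty]; exact filter_subset _ _)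

end Pipes

section Runs

variable {n C t : ℕ} {T M : ℕ → Finset ℕ}

variable (n t M) in
def runStarts : Finset ℕ := {i ∈ Icc 1 n | t ∈ M i ∧ (i = 1 ∨ t ∉ M (i - 1))}

lemma exists_mem_runStarts_le {i : ℕ} (hi : i ∈ Icc 1 n) (ht : t ∈ M i) :
    ∃ x ∈ runStarts n t M, x ≤ i ∧ ∀ j ∈ Icc x i, t ∈ M j := by
  induction i with
  | zero => simp at hi
  | succ i ih =>
    by_cases hstart : i + 1 = 1 ∨ t ∉ M i
    · refine ⟨i + 1, mem_filter.2 ⟨hi, ht, by simpa using hstart⟩, le_rfl, fun j hj => ?_⟩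
      rwa [le_antisymm (mem_Icc.1 hj).2 (mem_Icc.1 hj).1]
    push Not at hstart
    obtain ⟨x, hx, hxi, hrun⟩ := ih (by simp only [mem_Icc] at hi ⊢; omega) hstart.2
    refine ⟨x, hx, by omega, fun j hj => ?_⟩
    rcases (mem_Icc.1 hj).2.lt_or_eq with h | rfl
    · exact hrun j (mem_Icc.2 ⟨(mem_Icc.1 hj).1, by omega⟩)
    · exact ht

def unpiped (n : ℕ) (T M : ℕ → Finset ℕ) (t : ℕ) : Finset Gap :=
  {g ∈ (gaps n T).toFinset \ pipes n T M | g.tool = t}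

lemma IsGap.of_mem_unpiped (hout : ∀ i, i ∉ Icc 1 n → T i = ∅) {g : Gap}
    (hg : g ∈ unpiped n T M t) : IsGap n T g :=
  IsGap.of_mem_gaps hout (List.mem_toFinset.1 (mem_sdiff.1 (mem_filter.1 hg).1).1)

lemma exists_mem_runStarts_of_mem_unpiped (hout : ∀ i, i ∉ Icc 1 n → T i = ∅)
    (hTM : ∀ i ∈ Icc 1 n, T i ⊆ M i) {g : Gap} (hg : g ∈ unpiped n T M t) :
    ∃ x ∈ runStarts n t M, x ∈ Ioc g.lo g.hi ∧ ∃ y ∈ runStarts n t M, y < x := by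
  have hgap := IsGap.of_mem_unpiped hout hg
  obtain ⟨hgU, rfl⟩ := mem_filter.1 hg
  obtain ⟨hgaps, hgpipe⟩ := mem_sdiff.1 hgU
  have hloI : g.lo ∈ Icc 1 n := mem_Icc.2 ⟨hgap.one_le_lo, hgap.lo_lt_hi.le.trans hgap.hi_le⟩
  have hhiI : g.hi ∈ Icc 1 n := mem_Icc.2 ⟨hgap.one_le_lo.trans hgap.lo_lt_hi.le, hgap.hi_le⟩
  obtain ⟨i, hi, hti⟩ : ∃ i ∈ Ioo g.lo g.hi, g.tool ∉ M i := by
    simpa [pipes, hgaps, and_assoc] using hgpipe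
  obtain ⟨x, hx, hxhi, hrun⟩ := exists_mem_runStarts_le hhiI (hTM _ hhiI hgap.mem_hi)
  obtain ⟨y, hy, hylo, -⟩ := exists_mem_runStarts_le hloI (hTM _ hloI hgap.mem_lo)
  have hix : i < x := by
    by_contra! h
    exact hti (hrun i (mem_Icc.2 ⟨h, (mem_Ioo.1 hi).2.le⟩))
  have := (mem_Ioo.1 hi).1
  exact ⟨x, hx, mem_Ioc.2 ⟨by omega, hxhi⟩, y, hy, by omega⟩

lemma card_unpiped_lt_card_runStarts (hout : ∀ i, i ∉ Icc 1 n → T i = ∅)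
    (hTM : ∀ i ∈ Icc 1 n, T i ⊆ M i) (ht : t ∈ (Icc 1 n).biUnion T) :
    #(unpiped n T M t) < #(runStarts n t M) := by
  choose! f hf hfIoc hfabove using fun g => exists_mem_runStarts_of_mem_unpiped (g := g) hout hTM
  have hne : (runStarts n t M).Nonempty := by
    obtain ⟨i, hi, hti⟩ := mem_biUnion.1 ht
    obtain ⟨x, hx, -⟩ := exists_mem_runStarts_le hi (hTM i hi hti)
    exact ⟨x, hx⟩
  have hinj : Set.InjOn f (unpiped n T M t) := fun g hg g' hg' hfg =>
    (IsGap.of_mem_unpiped hout hg).eq_of_mem_Ioc (IsGap.of_mem_unpiped hout hg')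
      ((mem_filter.1 hg).2.trans (mem_filter.1 hg').2.symm) (hfIoc g hg) (hfg ▸ hfIoc g' hg')
  -- The first run start is not of the form `f g`.
  rw [← card_image_of_injOn hinj]
  refine card_lt_card <| (ssubset_iff_of_subset ?_).2 ⟨_, min'_mem _ hne, fun hmin => ?_⟩
  · exact image_subset_iff.2 hf
  · obtain ⟨g, hg, hfg⟩ := mem_image.1 hmin
    obtain ⟨y, hy, hyf⟩ := hfabove g hg
    exact absurd (min'_le _ y hy) (by omega)

lemma Realizes.mem_of_mem_runStarts {S : Finset Gap} (h : Realizes n T S M) {x : ℕ}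
    (hx : x ∈ runStarts n t M) : t ∈ T x := by
  obtain ⟨-, htx, hfirst⟩ := mem_filter.1 hx
  rw [h.apply_eq x] at htx
  refine (mem_union.1 htx).resolve_right fun hover => ?_
  obtain ⟨g, hg, rfl, hxg⟩ := mem_toolsOver.1 hover
  have hgap := h.isGap g hg
  have := hgap.one_le_lo
  rw [mem_Ioo] at hxg
  refine hfirst.elim (by omega) fun hprev => hprev ?_
  rw [h.apply_eq]
  rcases (Nat.le_sub_one_of_lt hxg.1).lt_or_eq with hlt | heq
  · exact mem_union_right _ (mem_toolsOver.2 ⟨g, hg, rfl, mem_Ioo.2 ⟨hlt, by omega⟩⟩)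
  · exact mem_union_left _ (heq ▸ hgap.mem_lo)

/-- Apart from the first one, every run of `t` in a magazine sequence made of required tools and
pipes starts at the end of an unbridged gap of `t`. -/
lemma Realizes.card_runStarts_le {S : Finset Gap} (h : Realizes n T S M) :
    #(runStarts n t M) ≤ #(unpiped n T M t) + 1 := by
  rcases (runStarts n t M).eq_empty_or_nonempty with hempty | hne
  · simp [hempty]
  set U := unpiped n T M t
  suffices runStarts n t M ⊆ insert ((runStarts n t M).min' hne) (U.image Gap.hi) from
    (card_le_card this).trans ((card_insert_le _ _).trans (Nat.add_le_add_right card_image_le 1))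
  intro x hx
  rw [mem_insert, mem_image]
  refine or_iff_not_imp_left.2 fun hxmin => ?_
  set y := (runStarts n t M).min' hne
  have hyx : y < x := lt_of_le_of_ne (min'_le _ x hx) (Ne.symm hxmin)
  have hy : y ∈ runStarts n t M := min'_mem _ hne
  have hy1 := (mem_Icc.1 (mem_filter.1 hy).1).1
  obtain ⟨hxn, htx, hfirst⟩ := mem_filter.1 hx
  obtain ⟨s, hs⟩ := exists_lastBefore_eq_some hyx (h.mem_of_mem_runStarts hy)
  obtain ⟨hsx, hts, -⟩ := lastBefore_eq_some hs
  refine ⟨⟨t, s, x⟩, mem_filter.2 ⟨mem_sdiff.2 ⟨List.mem_toFinset.2 <| mem_gaps.2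
    ⟨hxn, h.mem_of_mem_runStarts hx, hs⟩, fun hpipe => ?_⟩, rfl⟩, rfl⟩
  have hprev : t ∈ M (x - 1) := by
    rcases (Nat.le_sub_one_of_lt hsx).lt_or_eq with hlt | heq
    · exact (mem_filter.1 hpipe).2 (x - 1) (mem_Ioo.2 ⟨hlt, by dsimp only; omega⟩)
    · rw [← heq, h.apply_eq]
      exact mem_union_left _ hts
  exact hfirst.elim (by omega) (· hprev)

end Runs

section Fill

variable {n C : ℕ}

lemma subset_fillFrom (src dst : Finset ℕ) : dst ⊆ fillFrom C src dst := subset_union_left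

lemma fillFrom_subset_union (src dst : Finset ℕ) : fillFrom C src dst ⊆ src ∪ dst := by
  rw [fillFrom]
  refine union_subset subset_union_right fun x hx => ?_
  rw [List.mem_toFinset] at hx
  exact mem_union_left _ (mem_sdiff.1 ((mem_sort _).1 ((List.take_sublist _ _).subset hx))).1

lemma card_fillFrom {src dst : Finset ℕ} (h : #dst ≤ C) :
    #(fillFrom C src dst) = min C #(src ∪ dst) := by
  set l := (src \ dst).sort (· ≤ ·)
  have hdisj : Disjoint dst (l.take (C - #dst)).toFinset := disjoint_right.2 fun x hx => by
    have := (List.take_sublist _ _).subset (List.mem_toFinset.1 hx)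
    exact (mem_sdiff.1 ((mem_sort _).1 this)).2
  have htake : #(l.take (C - #dst)).toFinset = min (C - #dst) #(src \ dst) := by
    rw [List.toFinset_card_of_nodup ((List.take_sublist _ _).nodup (sort_nodup _ _)),
      List.length_take, length_sort]
  rw [fillFrom, card_union_of_disjoint hdisj, htake, ← card_sdiff_add_card]
  omega

lemma le_card_fillFrom {src dst : Finset ℕ} (h : #dst ≤ C) (hsrc : C ≤ #src) :
    C ≤ #(fillFrom C src dst) := by
  rw [card_fillFrom h]
  exact le_min le_rfl (hsrc.trans (card_le_card subset_union_left))

lemma le_card_fillFrom_or_eq {src dst : Finset ℕ} (h : #dst ≤ C) :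
    C ≤ #(fillFrom C src dst) ∨ fillFrom C src dst = src ∪ dst := by
  refine (le_or_gt C #(src ∪ dst)).imp (fun hC => ?_) fun hC => ?_
  · rw [card_fillFrom h]
    exact le_min le_rfl hC
  · exact eq_of_subset_of_card_le (fillFrom_subset_union src dst)
      (by rw [card_fillFrom h]; omega)

lemma passPairs_cons (p : ℕ × ℕ) (pairs : List (ℕ × ℕ)) (L : ℕ → Finset ℕ) :
    passPairs C (p :: pairs) L =
      passPairs C pairs (Function.update L p.2 (fillFrom C (L p.1) (L p.2))) := rfl

lemma passPairs_append (pairs pairs' : List (ℕ × ℕ)) (L : ℕ → Finset ℕ) :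
    passPairs C (pairs ++ pairs') L = passPairs C pairs' (passPairs C pairs L) :=
  List.foldl_append

lemma apply_subset_passPairs (pairs : List (ℕ × ℕ)) (L : ℕ → Finset ℕ) (i : ℕ) :
    L i ⊆ passPairs C pairs L i := by
  induction pairs generalizing L with
  | nil => exact Subset.rfl
  | cons p pairs ih =>
    rw [passPairs_cons]
    refine Subset.trans ?_ (ih _)
    rcases eq_or_ne i p.2 with rfl | hne
    · rw [Function.update_self]
      exact subset_fillFrom _ _
    · rw [Function.update_of_ne hne]

lemma passPairs_apply_of_forall_ne {pairs : List (ℕ × ℕ)} {x : ℕ} (hx : ∀ p ∈ pairs, p.2 ≠ x)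
    (L : ℕ → Finset ℕ) : passPairs C pairs L x = L x := by
  induction pairs generalizing L with
  | nil => rfl
  | cons p pairs ih =>
    rw [passPairs_cons, ih fun q hq => hx q (List.mem_cons_of_mem p hq),
      Function.update_of_ne (hx p List.mem_cons_self).symm]

lemma forall_passPairs_of_forall {Q : Finset ℕ → Prop}
    (hQ : ∀ src dst, Q src → Q dst → Q (fillFrom C src dst)) (pairs : List (ℕ × ℕ))
    {L : ℕ → Finset ℕ} (hL : ∀ i, Q (L i)) (i : ℕ) : Q (passPairs C pairs L i) := by
  induction pairs generalizing L with
  | nil => exact hL i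
  | cons p pairs ih =>
    rw [passPairs_cons]
    refine ih fun j => ?_
    rcases eq_or_ne j p.2 with rfl | hne
    · rw [Function.update_self]
      exact hQ _ _ (hL _) (hL _)
    · rw [Function.update_of_ne hne]
      exact hL j

def chainPairs (c : ℕ → ℕ) (k : ℕ) : List (ℕ × ℕ) :=
  (List.range k).map fun i => (c i, c (i + 1))

lemma fwdPairs_eq_chainPairs : fwdPairs n = chainPairs (· + 1) (n - 1) := rfl

lemma bwdPairs_eq_chainPairs : bwdPairs n = chainPairs (n - ·) (n - 1) :=
  List.map_congr_left fun i _ => by simp only [Nat.sub_sub]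

lemma chainPairs_succ (c : ℕ → ℕ) (k : ℕ) :
    chainPairs c (k + 1) = chainPairs c k ++ [(c k, c (k + 1))] := by
  simp [chainPairs, List.range_succ]

lemma chainPairs_add (c : ℕ → ℕ) (k m : ℕ) :
    chainPairs c (k + m) = chainPairs c k ++ chainPairs (fun i => c (k + i)) m := by
  simp [chainPairs, List.range_add, Nat.add_assoc]

lemma le_card_or_subset_passPairs_chainPairs {c : ℕ → ℕ} {k : ℕ}
    (hc : Set.InjOn c (Set.Iic k)) {L : ℕ → Finset ℕ} (hL : ∀ i, #(L i) ≤ C) :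
    C ≤ #(passPairs C (chainPairs c k) L (c k)) ∨
      ∀ i ≤ k, L (c i) ⊆ passPairs C (chainPairs c k) L (c k) := by
  induction k with
  | zero =>
    refine Or.inr fun i hi => ?_
    rw [Nat.le_zero.1 hi]
    exact Subset.rfl
  | succ k ih =>
    have hdst : passPairs C (chainPairs c k) L (c (k + 1)) = L (c (k + 1)) := by
      refine passPairs_apply_of_forall_ne (fun p hp => ?_) L
      obtain ⟨i, hi, rfl⟩ := List.mem_map.1 hp
      have hik := List.mem_range.1 hi
      intro h
      have := hc (Set.mem_Iic.2 (by omega)) (Set.mem_Iic.2 le_rfl) h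
      omega
    have hstep : passPairs C (chainPairs c (k + 1)) L (c (k + 1)) =
        fillFrom C (passPairs C (chainPairs c k) L (c k)) (L (c (k + 1))) := by
      rw [chainPairs_succ, passPairs_append, passPairs_cons, ← hdst]
      exact Function.update_self _ _ _
    have hdstC := hL (c (k + 1))
    rw [hstep]
    rcases ih (hc.mono (Set.Iic_subset_Iic.2 k.le_succ)) with hfull | hsub
    · exact Or.inl (le_card_fillFrom hdstC hfull)
    refine (le_card_fillFrom_or_eq hdstC).imp id fun heq i hi => ?_
    rcases hi.lt_or_eq with hi | rfl
    · exact (hsub i (by omega)).trans (heq ▸ subset_union_left)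
    · exact subset_fillFrom _ _

end Fill

section ToFullMag

variable {n C t : ℕ}

lemma apply_subset_toFullMag (L : ℕ → Finset ℕ) (i : ℕ) : L i ⊆ toFullMag C n L i :=
  (apply_subset_passPairs _ L i).trans (apply_subset_passPairs _ _ i)

lemma toFullMag_subset {L : ℕ → Finset ℕ} {P : Finset ℕ} (hL : ∀ i, L i ⊆ P) (i : ℕ) :
    toFullMag C n L i ⊆ P :=
  have hQ (src dst : Finset ℕ) (hs : src ⊆ P) (hd : dst ⊆ P) : fillFrom C src dst ⊆ P :=
    (fillFrom_subset_union src dst).trans (union_subset hs hd)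
  forall_passPairs_of_forall hQ _ (forall_passPairs_of_forall hQ _ hL) i

lemma card_passPairs_le (pairs : List (ℕ × ℕ)) {L : ℕ → Finset ℕ} (hL : ∀ i, #(L i) ≤ C)
    (i : ℕ) : #(passPairs C pairs L i) ≤ C :=
  forall_passPairs_of_forall (Q := (#· ≤ C))
    (fun _ _ _ hd => (card_fillFrom hd).trans_le (min_le_left _ _)) pairs hL i

lemma card_toFullMag_le {L : ℕ → Finset ℕ} (hL : ∀ i, #(L i) ≤ C) (i : ℕ) :
    #(toFullMag C n L i) ≤ C :=
  card_passPairs_le _ (card_passPairs_le _ hL) i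

/-- The forward pass fills position `n` from all positions; the backward pass then passes the
full magazine at `n` down to every position. -/
lemma le_card_toFullMag {L : ℕ → Finset ℕ} (hL : ∀ i, #(L i) ≤ C)
    (hC : C ≤ #((Icc 1 n).biUnion L)) {i : ℕ} (hi : i ∈ Icc 1 n) :
    C ≤ #(toFullMag C n L i) := by
  obtain ⟨hi1, hin⟩ := mem_Icc.1 hi
  set F := passPairs C (fwdPairs n) L
  have hFn : C ≤ #(F n) := by
    have hinj : Set.InjOn (· + 1) (Set.Iic (n - 1)) := fun a _ b _ h => Nat.succ_injective h
    have hn : n - 1 + 1 = n := by omega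
    rcases le_card_or_subset_passPairs_chainPairs hinj hL with hfull | hsub
    · rwa [← fwdPairs_eq_chainPairs, hn] at hfull
    refine hC.trans (card_le_card (biUnion_subset.2 fun j hj => ?_))
    have := hsub (j - 1) (by simp only [mem_Icc] at hj; omega)
    rwa [← fwdPairs_eq_chainPairs, hn, Nat.sub_add_cancel (mem_Icc.1 hj).1] at this
  have hinj : Set.InjOn (n - ·) (Set.Iic (n - i)) := fun a ha b hb h => by
    simp only [Set.mem_Iic] at ha hb h
    omega
  have hni : n - (n - i) = i := by omega
  have hsplit : n - i + (i - 1) = n - 1 := by omega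
  rw [toFullMag, bwdPairs_eq_chainPairs, ← hsplit, chainPairs_add, passPairs_append]
  refine le_trans ?_ (card_le_card (apply_subset_passPairs _ _ i))
  rcases le_card_or_subset_passPairs_chainPairs hinj (card_passPairs_le _ hL) with hfull | hsub
  · rwa [hni] at hfull
  · rw [hni] at hsub
    exact hFn.trans (card_le_card (hsub 0 (Nat.zero_le _)))

variable (n t) in
lemma mem_runStarts_update_iff {N : ℕ → Finset ℕ} {b : ℕ} (D : Finset ℕ) {i : ℕ} (hib : i ≠ b)
    (hib' : i ≠ b + 1) : i ∈ runStarts n t (Function.update N b D) ↔ i ∈ runStarts n t N := by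
  simp only [runStarts, mem_filter, mem_Icc]
  by_cases hi : 1 ≤ i
  · rw [Function.update_of_ne hib, Function.update_of_ne (by omega)]
  · simp [hi]

/-- A new load of `t` at `b` joins the run of `t` through `a`. -/
lemma card_runStarts_update_le {N : ℕ → Finset ℕ} {a b : ℕ} {D : Finset ℕ}
    (ha : a ∈ Icc 1 n) (hb : b ∈ Icc 1 n) (hab : a + 1 = b ∨ a = b + 1) (hbD : N b ⊆ D)
    (hD : D ⊆ N a ∪ N b) : #(runStarts n t (Function.update N b D)) ≤ #(runStarts n t N) := by
  by_cases hnew : t ∈ D ∧ t ∉ N b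
  swap
  · have hmem : ∀ i, t ∈ Function.update N b D i ↔ t ∈ N i := fun i => by
      rcases eq_or_ne i b with rfl | hi
      · rw [Function.update_self]
        exact ⟨fun h => by_contra fun h' => hnew ⟨h, h'⟩, fun h => hbD h⟩
      · rw [Function.update_of_ne hi]
    exact (congrArg card (filter_congr fun i _ => by rw [hmem, hmem])).le
  obtain ⟨htD, htb⟩ := hnew
  have hta : t ∈ N a := (mem_union.1 (hD htD)).resolve_right htb
  rw [mem_Icc] at ha hb
  have hnotStart : ∀ i, 2 ≤ i → t ∈ Function.update N b D (i - 1) →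
      i ∉ runStarts n t (Function.update N b D) := fun i hi hprev hstart =>
    (mem_filter.1 hstart).2.2.elim (by omega) (· hprev)
  have hb1 : b + 1 ∉ runStarts n t (Function.update N b D) :=
    hnotStart (b + 1) (by omega) (by rw [Nat.add_sub_cancel, Function.update_self]; exact htD)
  rcases hab with rfl | rfl
  · refine card_le_card fun i hi => (mem_runStarts_update_iff n t D ?_ ?_).1 hi
    · rintro rfl
      refine hnotStart _ (by omega) ?_ hi
      rwa [Nat.add_sub_cancel, Function.update_of_ne (by omega)]
    · rintro rfl
      exact hb1 hi
  · have hstart : b + 1 ∈ runStarts n t N :=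
      mem_filter.2 ⟨mem_Icc.2 ha, hta, Or.inr (by rwa [Nat.add_sub_cancel])⟩
    calc #(runStarts n t (Function.update N b D))
        ≤ #(insert b ((runStarts n t N).erase (b + 1))) := card_le_card fun i hi => by
          rcases eq_or_ne i b with rfl | hib
          · exact mem_insert_self _ _
          · have hib' : i ≠ b + 1 := by rintro rfl; exact hb1 hi
            exact mem_insert_of_mem (mem_erase.2 ⟨hib', (mem_runStarts_update_iff n t D hib
              hib').1 hi⟩)
      _ ≤ #((runStarts n t N).erase (b + 1)) + 1 := card_insert_le _ _
      _ = #(runStarts n t N) := card_erase_add_one hstart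

lemma card_runStarts_passPairs_le {pairs : List (ℕ × ℕ)}
    (hpairs : ∀ p ∈ pairs, p.1 ∈ Icc 1 n ∧ p.2 ∈ Icc 1 n ∧ (p.1 + 1 = p.2 ∨ p.1 = p.2 + 1))
    (L : ℕ → Finset ℕ) : #(runStarts n t (passPairs C pairs L)) ≤ #(runStarts n t L) := by
  induction pairs generalizing L with
  | nil => exact le_rfl
  | cons p pairs ih =>
    obtain ⟨ha, hb, hab⟩ := hpairs p List.mem_cons_self
    rw [passPairs_cons]
    exact (ih (fun q hq => hpairs q (List.mem_cons_of_mem p hq)) _).trans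
      (card_runStarts_update_le ha hb hab (subset_fillFrom _ _) (fillFrom_subset_union _ _))

lemma card_runStarts_toFullMag_le (L : ℕ → Finset ℕ) :
    #(runStarts n t (toFullMag C n L)) ≤ #(runStarts n t L) := by
  refine (card_runStarts_passPairs_le (fun p hp => ?_) _).trans
    (card_runStarts_passPairs_le (fun p hp => ?_) L)
  all_goals
    obtain ⟨i, hi, rfl⟩ := List.mem_map.1 hp
    simp only [List.mem_range, mem_Icc, true_or, and_true] at hi ⊢
    omega

end ToFullMag

section Counting

variable {n C : ℕ} {T M : ℕ → Finset ℕ}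

lemma sum_card_runStarts (hn : 1 ≤ n) {P : Finset ℕ} (hP : ∀ i ∈ Icc 1 n, M i ⊆ P) :
    ∑ t ∈ P, #(runStarts n t M) = switches n M + #(M 1) := by
  have hrow : ∀ i ∈ Icc 1 n, #{t ∈ P | t ∈ M i ∧ (i = 1 ∨ t ∉ M (i - 1))} =
      if i = 1 then #(M 1) else #(M i \ M (i - 1)) := by
    intro i hi
    split_ifs with h1
    · subst h1
      congr 1
      ext t
      simpa using fun ht => hP 1 hi ht
    · congr 1
      ext t
      simpa [h1] using fun ht _ => hP i hi ht
  have hsplit : Icc 1 n = insert 1 ((Icc 1 (n - 1)).map (addRightEmbedding 1)) := by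
    rw [map_add_right_Icc]
    ext i
    simp only [mem_Icc, mem_insert]
    omega
  calc ∑ t ∈ P, #(runStarts n t M)
      = ∑ i ∈ Icc 1 n, #{t ∈ P | t ∈ M i ∧ (i = 1 ∨ t ∉ M (i - 1))} := by
        simp only [runStarts, card_filter]
        exact sum_comm
    _ = ∑ i ∈ Icc 1 n, if i = 1 then #(M 1) else #(M i \ M (i - 1)) := sum_congr rfl hrow
    _ = switches n M + #(M 1) := by
        rw [hsplit, sum_insert (by simp), sum_map, switches, add_comm, if_pos rfl]
        congr 1
        refine sum_congr rfl fun i hi => ?_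
        rw [addRightEmbedding_apply, if_neg (by simp only [mem_Icc] at hi; omega),
          Nat.add_sub_cancel]

lemma sum_card_unpiped_add_card_pipes (hout : ∀ i, i ∉ Icc 1 n → T i = ∅)
    (M : ℕ → Finset ℕ) :
    ∑ t ∈ (Icc 1 n).biUnion T, #(unpiped n T M t) +
      #(pipes n T M) = #(gaps n T).toFinset := by
  unfold unpiped
  rw [← card_eq_sum_card_fiberwise fun g hg =>
      (IsGap.of_mem_gaps hout (List.mem_toFinset.1 (mem_sdiff.1 hg).1)).tool_mem_biUnion,
    card_sdiff_add_card_eq_card (s := pipes n T M) (filter_subset _ _)]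

lemma card_gaps_add_card_le_switches (hout : ∀ i, i ∉ Icc 1 n → T i = ∅) (hn : 1 ≤ n)
    (hM : Feasible C n T M) :
    #(gaps n T).toFinset + #((Icc 1 n).biUnion T) ≤ switches n M + #(pipes n T M) + C := by
  have hruns : ∑ t ∈ (Icc 1 n).biUnion T, (#(unpiped n T M t) + 1) ≤
      ∑ t ∈ (Icc 1 n).biUnion T, #(runStarts n t M) :=
    sum_le_sum fun t ht => card_unpiped_lt_card_runStarts hout (fun i hi => (hM i hi).1) ht
  rw [sum_card_runStarts hn fun i hi => (hM i hi).2.2, (hM 1 (mem_Icc.2 ⟨le_rfl, hn⟩)).2.1,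
    sum_add_distrib, sum_const, smul_eq_mul, mul_one] at hruns
  have := sum_card_unpiped_add_card_pipes hout M
  omega

lemma switches_toFullMag_GPCA_add_le (hout : ∀ i, i ∉ Icc 1 n → T i = ∅)
    (hTc : ∀ i ∈ Icc 1 n, #(T i) ≤ C) (hn : 1 ≤ n)
    (hA : Feasible C n T (toFullMag C n (GPCA C n T))) :
    switches n (toFullMag C n (GPCA C n T)) + #(pipes n T (GPCA C n T)) + C ≤
      #(gaps n T).toFinset + #((Icc 1 n).biUnion T) := by
  have hruns : ∑ t ∈ (Icc 1 n).biUnion T, #(runStarts n t (toFullMag C n (GPCA C n T))) ≤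
      ∑ t ∈ (Icc 1 n).biUnion T, (#(unpiped n T (GPCA C n T) t) + 1) :=
    sum_le_sum fun _ _ => (card_runStarts_toFullMag_le _).trans
      (realizes_GPCA hout hTc).card_runStarts_le
  rw [sum_card_runStarts hn fun i hi => (hA i hi).2.2, (hA 1 (mem_Icc.2 ⟨le_rfl, hn⟩)).2.1,
    sum_add_distrib, sum_const, smul_eq_mul, mul_one] at hruns
  have := sum_card_unpiped_add_card_pipes hout (GPCA C n T)
  omega

lemma feasible_toFullMag_GPCA (hout : ∀ i, i ∉ Icc 1 n → T i = ∅)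
    (hTc : ∀ i ∈ Icc 1 n, #(T i) ≤ C) (hm : C < #((Icc 1 n).biUnion T)) :
    Feasible C n T (toFullMag C n (GPCA C n T)) := by
  have hG := card_GPCA_le hout hTc
  have hpool : C ≤ #((Icc 1 n).biUnion (GPCA C n T)) :=
    hm.le.trans (card_le_card (biUnion_mono fun i _ => subset_GPCA hout hTc i))
  exact fun i hi => ⟨(subset_GPCA hout hTc i).trans (apply_subset_toFullMag _ i),
    le_antisymm (card_toFullMag_le hG i) (le_card_toFullMag hG hpool hi),
    toFullMag_subset (GPCA_subset_biUnion hout hTc) i⟩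

end Counting

end ToolLoading

open ToolLoading

/-- Theorem 2, statement 2 (optimal solution of the Tool Loading Problem):
`ToFullMag(GPCA(T₁,…,Tₙ;C))` is a feasible full-magazine sequence attaining the minimum
number of tool switches. -/
theorem toFullMag_gpca_optimal (n C : ℕ) (T : ℕ → Finset ℕ) (hn : 1 ≤ n)
    (hout : ∀ i, i ∉ Finset.Icc 1 n → T i = ∅)
    (hTc : ∀ i ∈ Finset.Icc 1 n, (T i).card ≤ C)
    (hm : C < ((Finset.Icc 1 n).biUnion T).card) :
    Feasible C n T (toFullMag C n (GPCA C n T)) ∧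
    ∀ M, Feasible C n T M →
      switches n (toFullMag C n (GPCA C n T)) ≤ switches n M := by
  have hA := feasible_toFullMag_GPCA hout hTc hm
  refine ⟨hA, fun M hM => ?_⟩
  have hupper := switches_toFullMag_GPCA_add_le hout hTc hn hA
  have hlower := card_gaps_add_card_le_switches hout hn hM
  have hpipes := card_pipes_le_card_pipes_GPCA hout hTc hM
  omega
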